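/- arXiv:1411.0988 — 6 statements merged into one kernel-verified Lean document; each statement's English description precedes it below -/
import Mathlib

section
/- For any four pairwise distinct complex numbers $h_1,h_2,h_3,h_4$, the sum over all $2$-element subsets $I = \{i,j\}$ of $\{1,2,3,4\}$ of $\frac{\prod_{a=0}^{3} (a h_i + (3-a) h_j)}{\prod_{k \notin I} (h_i - h_k)(h_j - h_k)}$ equals $27$. -/
/-!
Each summand is the localization, at a torus-fixed line of `ℙ³`, of the top Chern class of
`Sym³` of the dual tautological bundle on the Grassmannian of lines; Bott's formula says their sum is
the degree of that class, which does not depend on the weights `h`. Concretely, over the common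
denominator `∏_{i<j} (h_i - h_j)` the poles cancel and the identity becomes a polynomial identity
over `ℤ`, so it holds in every field.
-/

open Finset

theorem sum_ite_lt_fin_four {M : Type*} [AddCommMonoid M] (f : Fin 4 → Fin 4 → M) :
    ∑ i : Fin 4, ∑ j : Fin 4, (if i < j then f i j else 0) =
      f 0 1 + f 0 2 + f 0 3 + f 1 2 + f 1 3 + f 2 3 := by
  simp +decide only [Fin.sum_univ_four, if_true, if_false, add_zero, zero_add]
  abel

theorem prod_range_four_weights {R : Type*} [CommRing R] (x y : R) :
    ∏ a ∈ range 4, ((a : R) * x + ((3 - a : ℕ) : R) * y) = 9 * x * y * (x + 2 * y) * (2 * x + y) := by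
  simp only [prod_range_succ, prod_range_zero]
  norm_num
  ring

theorem sum_pair_residues_eq_27 {K : Type*} [Field K] {a b c d : K} (hab : a ≠ b) (hac : a ≠ c)
    (had : a ≠ d) (hbc : b ≠ c) (hbd : b ≠ d) (hcd : c ≠ d) :
    9 * a * b * (a + 2 * b) * (2 * a + b) / ((a - c) * (b - c) * ((a - d) * (b - d))) +
    9 * a * c * (a + 2 * c) * (2 * a + c) / ((a - b) * (c - b) * ((a - d) * (c - d))) +
    9 * a * d * (a + 2 * d) * (2 * a + d) / ((a - b) * (d - b) * ((a - c) * (d - c))) +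
    9 * b * c * (b + 2 * c) * (2 * b + c) / ((b - a) * (c - a) * ((b - d) * (c - d))) +
    9 * b * d * (b + 2 * d) * (2 * b + d) / ((b - a) * (d - a) * ((b - c) * (d - c))) +
    9 * c * d * (c + 2 * d) * (2 * c + d) / ((c - a) * (d - a) * ((c - b) * (d - b))) = 27 := by
  have := sub_ne_zero.mpr hab; have := sub_ne_zero.mpr hab.symm
  have := sub_ne_zero.mpr hac; have := sub_ne_zero.mpr hac.symm
  have := sub_ne_zero.mpr had; have := sub_ne_zero.mpr had.symm
  have := sub_ne_zero.mpr hbc; have := sub_ne_zero.mpr hbc.symm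
  have := sub_ne_zero.mpr hbd; have := sub_ne_zero.mpr hbd.symm
  have := sub_ne_zero.mpr hcd; have := sub_ne_zero.mpr hcd.symm
  field_simp
  ring

theorem lines_on_cubic_surface (h : Fin 4 → ℂ) (hdist : Function.Injective h) :
    ∑ i : Fin 4, ∑ j : Fin 4,
      (if i < j then
        (∏ a ∈ Finset.range 4, ((a : ℂ) * h i + ((3 - a : ℕ) : ℂ) * h j)) /
          ∏ k ∈ Finset.univ \ {i, j}, ((h i - h k) * (h j - h k))
      else 0) = 27 := by
  rw [sum_ite_lt_fin_four]
  simp +decide only [prod_range_four_weights, prod_pair, ne_eq,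
    show (univ \ {0, 1} : Finset (Fin 4)) = {2, 3} by decide,
    show (univ \ {0, 2} : Finset (Fin 4)) = {1, 3} by decide,
    show (univ \ {0, 3} : Finset (Fin 4)) = {1, 2} by decide,
    show (univ \ {1, 2} : Finset (Fin 4)) = {0, 3} by decide,
    show (univ \ {1, 3} : Finset (Fin 4)) = {0, 2} by decide,
    show (univ \ {2, 3} : Finset (Fin 4)) = {0, 1} by decide]
  exact sum_pair_residues_eq_27 (hdist.ne (by decide)) (hdist.ne (by decide))
    (hdist.ne (by decide)) (hdist.ne (by decide)) (hdist.ne (by decide)) (hdist.ne (by decide))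
end

section
/- For any pairwise distinct real (or complex) numbers $h_1,\dots,h_{n+1}$ with $n \geq 2$, the sum $\sum_{1 \leq i < j \leq n+1} \frac{\prod_{a=0}^{2n-3} (a h_i + (2n-3-a) h_j)}{\prod_{k \neq i,j} (h_i - h_k)(h_j - h_k)}$ is independent of the choice of $h_1,\dots,h_{n+1}$ (i.e., it equals the same value for all such tuples). -/
/-!
Write `D_i = ∏_{k ≠ i} (h_i - h_k)`. Lagrange interpolation gives `∑_i h_i ^ m / D_i = [m = n]`
for `m ≤ n`, so for every bivariate form `F` of degree `2n` the double sum
`∑_{i,j} F(h_i, h_j) / (D_i D_j)` is the coefficient of `x^n y^n` in `F`, whatever the `h_i`.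
Since `D_i D_j = -(h_i - h_j)^2 ∏_{k ≠ i,j} (h_i - h_k)(h_j - h_k)`, twice the Bott sum is this
double sum for `F = -(x - y)^2 ∏_a (a x + (2n - 3 - a) y)`, which is symmetric and vanishes on
the diagonal.
-/

open Finset

theorem sum_sum_eq_two_nsmul_sum_sum_ite_lt {ι M : Type*} [Fintype ι] [LinearOrder ι]
    [AddCommMonoid M] {f : ι → ι → M} (hf : ∀ i j, f i j = f j i) (hdiag : ∀ i, f i i = 0) :
    ∑ i, ∑ j, f i j = 2 • ∑ i, ∑ j, if i < j then f i j else 0 := by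
  have hsplit : ∀ i j, f i j = (if i < j then f i j else 0) + if j < i then f j i else 0 := by
    intro i j
    rcases lt_trichotomy i j with h | rfl | h
    · simp [h, h.not_gt]
    · simp [hdiag]
    · simp [h, h.not_gt, hf i j]
  rw [sum_congr rfl fun i _ => sum_congr rfl fun j _ => hsplit i j]
  simp only [sum_add_distrib, two_nsmul]
  rw [sum_comm (f := fun i j => if j < i then f j i else 0)]

namespace Lagrange

variable {K ι : Type*} [Field K] [DecidableEq ι] {s : Finset ι} {v : ι → K}

theorem sum_nodalWeight_mul_pow (hv : Set.InjOn v s) {m : ℕ} (hm : m < #s) :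
    ∑ i ∈ s, nodalWeight s v i * v i ^ m = if m + 1 = #s then 1 else 0 := by
  have hdeg : (Polynomial.X ^ m : Polynomial K).degree < #s := by
    rw [Polynomial.degree_X_pow]; exact_mod_cast hm
  have hcoeff := coeff_eq_sum hv hdeg
  simp only [Polynomial.coeff_X_pow, Polynomial.eval_pow, Polynomial.eval_X,
    show #s - 1 = m ↔ m + 1 = #s by omega] at hcoeff
  rw [hcoeff]
  refine sum_congr rfl fun i _ => ?_
  rw [nodalWeight, prod_inv_distrib, div_eq_inv_mul]

theorem sum_nodalWeight_mul_pow_mul_sum {n : ℕ} (hv : Set.InjOn v s) (hs : #s = n + 1) {a b : ℕ}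
    (hab : a + b ≤ 2 * n) :
    (∑ i ∈ s, nodalWeight s v i * v i ^ a) * (∑ j ∈ s, nodalWeight s v j * v j ^ b) =
      if a = n ∧ b = n then 1 else 0 := by
  have hsum : ∀ m ≤ n, ∑ i ∈ s, nodalWeight s v i * v i ^ m = if m = n then 1 else 0 := by
    intro m hm
    rw [sum_nodalWeight_mul_pow hv (by omega)]
    simp only [hs, Nat.add_right_cancel_iff]
  rcases le_or_gt a n with ha | ha
  · rcases le_or_gt b n with hb | hb
    · rw [hsum a ha, hsum b hb, ite_zero_mul_ite_zero, mul_one]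
    · rw [hsum a ha, if_neg (by omega), zero_mul, if_neg (by omega)]
  · rw [hsum b (by omega), if_neg (by omega), mul_zero, if_neg (by omega)]

theorem nodalWeight_mul_nodalWeight {i j : ι} (hi : i ∈ s) (hj : j ∈ s) (hij : v i ≠ v j) :
    nodalWeight s v i * nodalWeight s v j =
      -((v i - v j) ^ 2)⁻¹ * (∏ k ∈ s \ {i, j}, ((v i - v k) * (v j - v k)))⁻¹ := by
  have hne : i ≠ j := fun h => hij (congrArg v h)
  have hsi : s \ {i, j} = (s.erase i).erase j := by
    rw [sdiff_insert, sdiff_singleton_eq_erase, erase_right_comm]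
  have hsj : s \ {i, j} = (s.erase j).erase i := by
    rw [sdiff_insert, sdiff_singleton_eq_erase]
  rw [nodalWeight, nodalWeight, ← mul_prod_erase _ _ (mem_erase.2 ⟨hne.symm, hj⟩),
    ← mul_prod_erase _ _ (mem_erase.2 ⟨hne, hi⟩), ← hsi, ← hsj, prod_mul_distrib,
    mul_inv, prod_inv_distrib, prod_inv_distrib]
  have hij' : v i - v j ≠ 0 := sub_ne_zero.2 hij
  have hji' : v j - v i ≠ 0 := sub_ne_zero.2 (Ne.symm hij)
  field_simp
  ring

theorem sum_sum_nodalWeight_mul_eval {n : ℕ} (hv : Set.InjOn v s) (hs : #s = n + 1)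
    {F : MvPolynomial (Fin 2) K} (hF : F.totalDegree ≤ 2 * n) :
    ∑ i ∈ s, ∑ j ∈ s, nodalWeight s v i * nodalWeight s v j * MvPolynomial.eval ![v i, v j] F =
      F.coeff (Finsupp.single 0 n + Finsupp.single 1 n) := by
  have hmono : ∀ d : Fin 2 →₀ ℕ,
      d = Finsupp.single 0 n + Finsupp.single 1 n ↔ d 0 = n ∧ d 1 = n := by
    refine fun d => ⟨by rintro rfl; simp, fun ⟨h0, h1⟩ => ?_⟩
    ext k; fin_cases k <;> simp [h0, h1]
  have hdeg : ∀ d ∈ F.support, d 0 + d 1 ≤ 2 * n := fun d hd => by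
    simpa [Finsupp.sum_fintype, Fin.sum_univ_two] using (MvPolynomial.le_totalDegree hd).trans hF
  calc _ = ∑ d ∈ F.support, F.coeff d *
        ((∑ i ∈ s, nodalWeight s v i * v i ^ d 0) * (∑ j ∈ s, nodalWeight s v j * v j ^ d 1)) := by
        simp only [MvPolynomial.eval_eq', Fin.prod_univ_two, Matrix.cons_val_zero,
          Matrix.cons_val_one]
        simp only [sum_mul_sum]
        simp only [mul_sum]
        rw [sum_comm (s := F.support)]
        refine sum_congr rfl fun i _ => ?_
        rw [sum_comm (s := F.support)]
        exact sum_congr rfl fun j _ => sum_congr rfl fun d _ => by ring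
    _ = ∑ d ∈ F.support,
          F.coeff d * if d = Finsupp.single 0 n + Finsupp.single 1 n then 1 else 0 := by
        refine sum_congr rfl fun d hd => ?_
        rw [sum_nodalWeight_mul_pow_mul_sum hv hs (hdeg d hd)]
        simp only [hmono]
    _ = _ := by
        simp only [mul_ite, mul_one, mul_zero, sum_ite_eq']
        split_ifs with h
        · rfl
        · exact (MvPolynomial.notMem_support_iff.1 h).symm

end Lagrange

section Lines

variable {K : Type*} [Field K]

def linesNumerator (n : ℕ) (x y : K) : K :=
  ∏ a ∈ range (2 * n - 2), ((a : K) * x + ((2 * n - 3 - a : ℕ) : K) * y)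

theorem linesNumerator_comm (n : ℕ) (x y : K) : linesNumerator n x y = linesNumerator n y x := by
  unfold linesNumerator
  rw [← prod_range_reflect]
  refine prod_congr rfl fun a ha => ?_
  rw [mem_range] at ha
  rw [show 2 * n - 2 - 1 - a = 2 * n - 3 - a by omega,
    show 2 * n - 3 - (2 * n - 3 - a) = a by omega]
  ring

open MvPolynomial in
noncomputable def linesPoly (n : ℕ) : MvPolynomial (Fin 2) K :=
  -(X 0 - X 1) ^ 2 *
    ∏ a ∈ range (2 * n - 2), (C (a : K) * X 0 + C ((2 * n - 3 - a : ℕ) : K) * X 1)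

theorem eval_linesPoly (n : ℕ) (x y : K) :
    MvPolynomial.eval ![x, y] (linesPoly n) = -(x - y) ^ 2 * linesNumerator n x y := by
  simp [linesPoly, linesNumerator]

open MvPolynomial in
theorem isHomogeneous_linesPoly {n : ℕ} (hn : 1 ≤ n) :
    (linesPoly n : MvPolynomial (Fin 2) K).IsHomogeneous (2 * n) := by
  have hlin := IsHomogeneous.prod (range (2 * n - 2))
    (fun a => C (a : K) * X 0 + C ((2 * n - 3 - a : ℕ) : K) * X 1) (fun _ => 1)
    fun a _ => (isHomogeneous_C_mul_X _ (0 : Fin 2)).add (isHomogeneous_C_mul_X _ 1)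
  have := (((isHomogeneous_X K (0 : Fin 2)).sub (isHomogeneous_X K 1)).pow 2).neg.mul hlin
  rw [sum_const, card_range, smul_eq_mul, mul_one, show 1 * 2 + (2 * n - 2) = 2 * n by omega]
    at this
  unfold linesPoly
  exact this

open Lagrange in
theorem two_mul_sum_lines_eq_coeff {n : ℕ} (hn : 1 ≤ n) {h : Fin (n + 1) → K}
    (hh : Function.Injective h) :
    2 * ∑ i, ∑ j, (if i < j then linesNumerator n (h i) (h j) /
        ∏ k ∈ univ \ {i, j}, ((h i - h k) * (h j - h k)) else 0) =
      (linesPoly n).coeff (Finsupp.single 0 n + Finsupp.single 1 n) := by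
  have hpair : ∀ i j, i ≠ j → linesNumerator n (h i) (h j) /
      ∏ k ∈ univ \ {i, j}, ((h i - h k) * (h j - h k)) =
        nodalWeight univ h i * nodalWeight univ h j *
          MvPolynomial.eval ![h i, h j] (linesPoly n) := by
    intro i j hij
    have hne : h i - h j ≠ 0 := sub_ne_zero.2 (hh.ne hij)
    rw [eval_linesPoly, nodalWeight_mul_nodalWeight (mem_univ i) (mem_univ j) (hh.ne hij)]
    field_simp
  have hsymm : ∀ i j, nodalWeight univ h i * nodalWeight univ h j *
      MvPolynomial.eval ![h i, h j] (linesPoly n) =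
        nodalWeight univ h j * nodalWeight univ h i * MvPolynomial.eval ![h j, h i] (linesPoly n) :=
    fun i j => by simp only [eval_linesPoly, linesNumerator_comm n (h i)]; ring
  have hdiag : ∀ i, nodalWeight univ h i * nodalWeight univ h i *
      MvPolynomial.eval ![h i, h i] (linesPoly n) = 0 := fun i => by simp [eval_linesPoly]
  rw [two_mul, ← two_nsmul, ← sum_sum_nodalWeight_mul_eval hh.injOn (card_fin _)
    (isHomogeneous_linesPoly hn).totalDegree_le, sum_sum_eq_two_nsmul_sum_sum_ite_lt hsymm hdiag]
  refine congrArg _ (sum_congr rfl fun i _ => sum_congr rfl fun j _ => ?_)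
  split_ifs with hij
  exacts [hpair i j hij.ne, rfl]

end Lines

theorem bott_sum_lines_constant (n : ℕ) (hn : 2 ≤ n) (h g : Fin (n + 1) → ℂ)
    (hdist : Function.Injective h) (gdist : Function.Injective g) :
    (∑ i : Fin (n + 1), ∑ j : Fin (n + 1),
      if i < j then
        (∏ a ∈ Finset.range (2 * n - 2), ((a : ℂ) * h i + ((2 * n - 3 - a : ℕ) : ℂ) * h j)) /
          ∏ k ∈ Finset.univ \ {i, j}, ((h i - h k) * (h j - h k))
      else 0) =
    (∑ i : Fin (n + 1), ∑ j : Fin (n + 1),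
      if i < j then
        (∏ a ∈ Finset.range (2 * n - 2), ((a : ℂ) * g i + ((2 * n - 3 - a : ℕ) : ℂ) * g j)) /
          ∏ k ∈ Finset.univ \ {i, j}, ((g i - g k) * (g j - g k))
      else 0) :=
  mul_left_cancel₀ two_ne_zero <| (two_mul_sum_lines_eq_coeff (by omega) hdist).trans
    (two_mul_sum_lines_eq_coeff (by omega) gdist).symm
end

section
/- For any pairwise distinct complex numbers $h_1, h_2, h_3, h_4$, one has $\sum_{1 \leq i < j \leq 4} \frac{(h_i h_j)\left(\sum_{k \neq i,j} h_k\right)^2}{\prod_{k \neq i,j}(h_i - h_k)(h_j - h_k)} = 1$, where each summand's numerator uses the exponent $\delta = 2$. -/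
open Finset

theorem fano_plane_localization_sum_eq_one {K : Type*} [Field K] {a b c d : K} (hab : a ≠ b)
    (hac : a ≠ c) (had : a ≠ d) (hbc : b ≠ c) (hbd : b ≠ d) (hcd : c ≠ d) :
    a * b * (c + d) ^ 2 / ((a - c) * (b - c) * ((a - d) * (b - d))) +
      a * c * (b + d) ^ 2 / ((a - b) * (c - b) * ((a - d) * (c - d))) +
      a * d * (b + c) ^ 2 / ((a - b) * (d - b) * ((a - c) * (d - c))) +
      b * c * (a + d) ^ 2 / ((b - a) * (c - a) * ((b - d) * (c - d))) +
      b * d * (a + c) ^ 2 / ((b - a) * (d - a) * ((b - c) * (d - c))) +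
      c * d * (a + b) ^ 2 / ((c - a) * (d - a) * ((c - b) * (d - b))) = 1 := by
  field_simp
  ring

theorem degree_fano_lines_on_plane_in_P3 (h : Fin 4 → ℂ) (hdist : Function.Injective h) :
    ∑ i : Fin 4, ∑ j : Fin 4,
      (if i < j then
        (h i * h j) * (∑ k ∈ Finset.univ \ {i, j}, h k) ^ 2 /
          ∏ k ∈ Finset.univ \ {i, j}, ((h i - h k) * (h j - h k))
      else 0) = 1 := by
  simpa [Fin.sum_univ_four, Fin.prod_univ_four, sdiff_eq_filter, prod_filter, sum_filter,
    add_assoc] using fano_plane_localization_sum_eq_one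
      (hdist.ne (show (0 : Fin 4) ≠ 1 by decide)) (hdist.ne (show (0 : Fin 4) ≠ 2 by decide))
      (hdist.ne (show (0 : Fin 4) ≠ 3 by decide)) (hdist.ne (show (1 : Fin 4) ≠ 2 by decide))
      (hdist.ne (show (1 : Fin 4) ≠ 3 by decide)) (hdist.ne (show (2 : Fin 4) ≠ 3 by decide))
end

section
/- For any pairwise distinct complex numbers $h_1, h_2, h_3, h_4$, the expression $(-1)^{1} \sum_I \frac{\prod_{a=0}^{2}(a h_i + (2-a) h_j) \cdot \left(\sum_{k \notin I} h_k\right)}{\prod_{k \notin I}(h_i - h_k)(h_j - h_k)}$, where the sum runs over all $2$-element subsets $I = \{i,j\}$ of $\{1,2,3,4\}$, is a constant independent of $h_1,h_2,h_3,h_4$. -/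
open Finset

lemma key (a b c d : ℂ) (hab : a - b ≠ 0) (hac : a - c ≠ 0) (had : a - d ≠ 0)
    (hbc : b - c ≠ 0) (hbd : b - d ≠ 0) (hcd : c - d ≠ 0) :
    -(2 * d * (c + d) * (2 * c) * (a + b) / ((c - a) * (d - a) * ((c - b) * (d - b)))) +
      (-(2 * d * (b + d) * (2 * b) * (a + c) / ((b - a) * (d - a) * ((b - c) * (d - c)))) +
          -(2 * c * (b + c) * (2 * b) * (a + d) /
              ((b - a) * (c - a) * ((b - d) * (c - d)))) +
        (-(2 * d * (a + d) * (2 * a) * (b + c) /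
              ((a - b) * (d - b) * ((a - c) * (d - c)))) +
          (-(2 * c * (a + c) * (2 * a) * (b + d) /
                ((a - b) * (c - b) * ((a - d) * (c - d)))) +
            -(2 * b * (a + b) * (2 * a) * (c + d) /
                ((a - c) * (b - c) * ((a - d) * (b - d))))))) = 4 := by
  have hV : (a - b) * (a - c) * (a - d) * (b - c) * (b - d) * (c - d) ≠ 0 := by
    exact mul_ne_zero (mul_ne_zero (mul_ne_zero (mul_ne_zero (mul_ne_zero hab hac) had) hbc) hbd) hcd
  set V := (a - b) * (a - c) * (a - d) * (b - c) * (b - d) * (c - d) with hVdef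
  have e1 : 2 * d * (c + d) * (2 * c) * (a + b) / ((c - a) * (d - a) * ((c - b) * (d - b)))
      = 2 * d * (c + d) * (2 * c) * (a + b) * ((a - b) * (c - d)) / V := by
    rw [div_eq_div_iff (mul_ne_zero (mul_ne_zero (fun e => hac (by linear_combination -e) : c - a ≠ 0) (fun e => had (by linear_combination -e) : d - a ≠ 0)) (mul_ne_zero (fun e => hbc (by linear_combination -e) : c - b ≠ 0) (fun e => hbd (by linear_combination -e) : d - b ≠ 0))) hV]
    ring
  have e2 : 2 * d * (b + d) * (2 * b) * (a + c) / ((b - a) * (d - a) * ((b - c) * (d - c)))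
      = 2 * d * (b + d) * (2 * b) * (a + c) * (-((a - c) * (b - d))) / V := by
    rw [div_eq_div_iff (mul_ne_zero (mul_ne_zero (fun e => hab (by linear_combination -e) : b - a ≠ 0) (fun e => had (by linear_combination -e) : d - a ≠ 0)) (mul_ne_zero hbc (fun e => hcd (by linear_combination -e) : d - c ≠ 0))) hV]
    ring
  have e3 : 2 * c * (b + c) * (2 * b) * (a + d) / ((b - a) * (c - a) * ((b - d) * (c - d)))
      = 2 * c * (b + c) * (2 * b) * (a + d) * ((a - d) * (b - c)) / V := by
    rw [div_eq_div_iff (mul_ne_zero (mul_ne_zero (fun e => hab (by linear_combination -e) : b - a ≠ 0) (fun e => hac (by linear_combination -e) : c - a ≠ 0)) (mul_ne_zero hbd hcd)) hV]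
    ring
  have e4 : 2 * d * (a + d) * (2 * a) * (b + c) / ((a - b) * (d - b) * ((a - c) * (d - c)))
      = 2 * d * (a + d) * (2 * a) * (b + c) * ((a - d) * (b - c)) / V := by
    rw [div_eq_div_iff (mul_ne_zero (mul_ne_zero hab (fun e => hbd (by linear_combination -e) : d - b ≠ 0)) (mul_ne_zero hac (fun e => hcd (by linear_combination -e) : d - c ≠ 0))) hV]
    ring
  have e5 : 2 * c * (a + c) * (2 * a) * (b + d) / ((a - b) * (c - b) * ((a - d) * (c - d)))
      = 2 * c * (a + c) * (2 * a) * (b + d) * (-((a - c) * (b - d))) / V := by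
    rw [div_eq_div_iff (mul_ne_zero (mul_ne_zero hab (fun e => hbc (by linear_combination -e) : c - b ≠ 0)) (mul_ne_zero had hcd)) hV]
    ring
  have e6 : 2 * b * (a + b) * (2 * a) * (c + d) / ((a - c) * (b - c) * ((a - d) * (b - d)))
      = 2 * b * (a + b) * (2 * a) * (c + d) * ((a - b) * (c - d)) / V := by
    rw [div_eq_div_iff (mul_ne_zero (mul_ne_zero hac hbc) (mul_ne_zero had hbd)) hV]
    ring
  rw [e1, e2, e3, e4, e5, e6]
  rw [← neg_div, ← neg_div, ← neg_div, ← neg_div, ← neg_div, ← neg_div]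
  rw [← add_div, ← add_div, ← add_div, ← add_div, ← add_div]
  rw [div_eq_iff hV, hVdef]
  ring

set_option maxHeartbeats 1600000 in
lemma aux (h : Fin 4 → ℂ) (hdist : Function.Injective h) :
    ((-1 : ℂ) ^ 1 * ∑ i : Fin 4, ∑ j : Fin 4,
      if i < j then
        (∏ a ∈ Finset.range 3, ((a : ℂ) * h i + ((2 - a : ℕ) : ℂ) * h j)) *
          (∑ k ∈ Finset.univ \ {i, j}, h k) /
          ∏ k ∈ Finset.univ \ {i, j}, ((h i - h k) * (h j - h k))
      else 0) = 4 := by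
  have ne : ∀ i j : Fin 4, i ≠ j → h i - h j ≠ 0 := fun i j hij => sub_ne_zero.mpr (fun e => hij (hdist e))
  simp only [show ((0:Fin 4)<1) from by decide, show ((0:Fin 4)<2) from by decide,
    show ((0:Fin 4)<3) from by decide, show ((1:Fin 4)<2) from by decide,
    show ((1:Fin 4)<3) from by decide, show ((2:Fin 4)<3) from by decide,
    show ¬((1:Fin 4)<0) from by decide, show ¬((2:Fin 4)<0) from by decide,
    show ¬((3:Fin 4)<0) from by decide, show ¬((2:Fin 4)<1) from by decide,
    show ¬((3:Fin 4)<1) from by decide, show ¬((3:Fin 4)<2) from by decide,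
    show ¬((0:Fin 4)<0) from by decide, show ¬((1:Fin 4)<1) from by decide,
    show ¬((2:Fin 4)<2) from by decide, show ¬((3:Fin 4)<3) from by decide,
    if_true, if_false, Fin.sum_univ_four, Finset.prod_range_succ, Finset.prod_range_zero,
    show ((univ : Finset (Fin 4)) \ {0, 1}) = {2, 3} from by decide,
    show ((univ : Finset (Fin 4)) \ {0, 2}) = {1, 3} from by decide,
    show ((univ : Finset (Fin 4)) \ {0, 3}) = {1, 2} from by decide,
    show ((univ : Finset (Fin 4)) \ {1, 2}) = {0, 3} from by decide,
    show ((univ : Finset (Fin 4)) \ {1, 3}) = {0, 2} from by decide,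
    show ((univ : Finset (Fin 4)) \ {2, 3}) = {0, 1} from by decide,
    Finset.sum_pair (by decide : (2:Fin 4) ≠ 3), Finset.prod_pair (by decide : (2:Fin 4) ≠ 3),
    Finset.sum_pair (by decide : (1:Fin 4) ≠ 3), Finset.prod_pair (by decide : (1:Fin 4) ≠ 3),
    Finset.sum_pair (by decide : (1:Fin 4) ≠ 2), Finset.prod_pair (by decide : (1:Fin 4) ≠ 2),
    Finset.sum_pair (by decide : (0:Fin 4) ≠ 3), Finset.prod_pair (by decide : (0:Fin 4) ≠ 3),
    Finset.sum_pair (by decide : (0:Fin 4) ≠ 2), Finset.prod_pair (by decide : (0:Fin 4) ≠ 2),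
    Finset.sum_pair (by decide : (0:Fin 4) ≠ 1), Finset.prod_pair (by decide : (0:Fin 4) ≠ 1)]
  push_cast
  norm_num
  exact key (h 0) (h 1) (h 2) (h 3) (ne 0 1 (by decide)) (ne 0 2 (by decide))
    (ne 0 3 (by decide)) (ne 1 2 (by decide)) (ne 1 3 (by decide)) (ne 2 3 (by decide))

theorem fano_degree_d2_n3_constant (h g : Fin 4 → ℂ)
    (hdist : Function.Injective h) (gdist : Function.Injective g) :
    ((-1 : ℂ) ^ 1 * ∑ i : Fin 4, ∑ j : Fin 4,
      if i < j then
        (∏ a ∈ Finset.range 3, ((a : ℂ) * h i + ((2 - a : ℕ) : ℂ) * h j)) *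
          (∑ k ∈ Finset.univ \ {i, j}, h k) /
          ∏ k ∈ Finset.univ \ {i, j}, ((h i - h k) * (h j - h k))
      else 0) =
    ((-1 : ℂ) ^ 1 * ∑ i : Fin 4, ∑ j : Fin 4,
      if i < j then
        (∏ a ∈ Finset.range 3, ((a : ℂ) * g i + ((2 - a : ℕ) : ℂ) * g j)) *
          (∑ k ∈ Finset.univ \ {i, j}, g k) /
          ∏ k ∈ Finset.univ \ {i, j}, ((g i - g k) * (g j - g k))
      else 0) := by
  rw [aux h hdist, aux g gdist]
end

section
/- For any pairwise distinct complex numbers $h_1, h_2, h_3, h_4, h_5$, the expression $\sum_{1 \leq i < j \leq 5} \frac{\prod_{a=0}^{2}(a h_i + (2-a) h_j) \cdot \left(\sum_{k \neq i,j} h_k\right)^{3}}{\prod_{k \neq i,j}(h_i - h_k)(h_j - h_k)}$ is independent of $h_1,\dots,h_5$, and its value times $(-1)^3$ is an integer. -/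
/-!
Clearing denominators turns the claim into a polynomial identity with integer coefficients:
every `T_I` divides the Vandermonde product `∏_{i<j} (h i - h j)`, and the numerators combine
to `-8` times it. Hence the sum equals `-8` for distinct weights in any field.
-/

open Finset

variable {K : Type*} [Field K]

/-- `S_I Q_I ^ 3 / T_I` for `I = {i, j}`. -/
def pairTerm {n : ℕ} (h : Fin n → K) (i j : Fin n) : K :=
  (∏ a ∈ range 3, ((a : K) * h i + ((2 - a : ℕ) : K) * h j)) * (∑ k ∈ univ \ {i, j}, h k) ^ 3 /
    ∏ k ∈ univ \ {i, j}, ((h i - h k) * (h j - h k))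

theorem sum_ite_lt_fin_five {M : Type*} [AddCommMonoid M] (f : Fin 5 → Fin 5 → M) :
    ∑ i, ∑ j, (if i < j then f i j else 0) =
      f 0 1 + f 0 2 + f 0 3 + f 0 4 + f 1 2 + f 1 3 + f 1 4 + f 2 3 + f 2 4 + f 3 4 := by
  simp [Fin.sum_univ_five, add_assoc]

theorem sum_pairTerm_fin_five {h : Fin 5 → K} (hh : Function.Injective h) :
    ∑ i, ∑ j, (if i < j then pairTerm h i j else 0) = -8 := by
  have hne : ∀ {i j : Fin 5}, i ≠ j → h i - h j ≠ 0 := fun hij => sub_ne_zero.mpr (hh.ne hij)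
  -- `field_simp` only sees a common factor when it is written the same way in every
  -- denominator, so each difference is first put in the form `h i - h j` with `i < j`.
  have hflip : ∀ {i j : Fin 5}, i < j → h j - h i = -(h i - h j) := fun _ => (neg_sub _ _).symm
  rw [sum_ite_lt_fin_five]
  simp only [pairTerm, sdiff_eq_filter, sum_filter, prod_filter, Fin.sum_univ_five,
    Fin.prod_univ_five, prod_range_succ, prod_range_zero, mem_insert, mem_singleton, Fin.reduceEq,
    or_self, or_true, true_or, if_true, if_false, not_true, not_false_eq_true, hflip, Fin.reduceLT]
  field_simp [hne]
  ring

theorem fano_degree_d2_n4_constant_integer :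
    ∃ c : ℤ, ∀ h : Fin 5 → ℂ, Function.Injective h →
      ((-1 : ℂ) ^ 3 * ∑ i : Fin 5, ∑ j : Fin 5,
        if i < j then
          (∏ a ∈ Finset.range 3, ((a : ℂ) * h i + ((2 - a : ℕ) : ℂ) * h j)) *
            (∑ k ∈ Finset.univ \ {i, j}, h k) ^ 3 /
            ∏ k ∈ Finset.univ \ {i, j}, ((h i - h k) * (h j - h k))
        else 0) = (c : ℂ) := by
  refine ⟨8, fun h hh => ?_⟩
  change (-1 : ℂ) ^ 3 * ∑ i, ∑ j, (if i < j then pairTerm h i j else 0) = _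
  rw [sum_pairTerm_fin_five hh]
  norm_num
end

section
/- For any pairwise distinct complex numbers $h_1,\dots,h_{n+1}$ with $n \geq 2$ (the case $k = 1$), $\sum_{1 \leq i < j \leq n+1} \frac{1}{\prod_{m \neq i,j}(h_i - h_m)(h_j - h_m)} = 0$ whenever $2(n-1) > 0$. -/
open Finset Polynomial Lagrange

lemma coeff_interpolate' {F : Type*} [Field F] {ι : Type*} [DecidableEq ι] (s : Finset ι)
    (v : ι → F) (hvs : Set.InjOn v s) (r : ι → F) :
    (interpolate s v r).coeff (#s - 1) = ∑ i ∈ s, r i * nodalWeight s v i := by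
  rw [interpolate_apply, finset_sum_coeff]
  refine sum_congr rfl fun i hi => ?_
  rw [coeff_C_mul]
  congr 1
  have hdeg := natDegree_basis hvs hi
  have hc : (Lagrange.basis s v i).coeff (#s - 1) = (Lagrange.basis s v i).leadingCoeff := by
    rw [← hdeg]; rfl
  rw [hc, Lagrange.basis, leadingCoeff_prod, nodalWeight]
  refine prod_congr rfl fun j hj => ?_
  have hne : v i ≠ v j := by
    intro hvij
    exact (mem_erase.mp hj).1 ((hvs.eq_iff (mem_of_mem_erase hj) hi).mp hvij.symm)
  rw [basisDivisor, leadingCoeff_mul, leadingCoeff_C, (monic_X_sub_C (v j)).leadingCoeff, mul_one]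

lemma sum_nodalWeight_zero {F : Type*} [Field F] {ι : Type*} [DecidableEq ι] (s : Finset ι)
    (v : ι → F) (hvs : Set.InjOn v s) (h2 : 2 ≤ #s) :
    ∑ i ∈ s, nodalWeight s v i = 0 := by
  have key := coeff_interpolate' s v hvs 1
  rw [interpolate_one hvs (card_pos.mp (by omega))] at key
  simp only [Pi.one_apply, one_mul] at key
  rw [← key, coeff_one, if_neg (by omega)]

lemma sum_node_mul_nodalWeight_zero {F : Type*} [Field F] {ι : Type*} [DecidableEq ι]
    (s : Finset ι) (v : ι → F) (hvs : Set.InjOn v s) (h3 : 3 ≤ #s) :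
    ∑ i ∈ s, v i * nodalWeight s v i = 0 := by
  have hX : (X : F[X]) = interpolate s v v := by
    refine eq_interpolate_of_eval_eq _ hvs ?_ fun i hi => eval_X
    rw [degree_X]
    exact_mod_cast WithBot.coe_lt_coe.mpr (by omega)
  have key := coeff_interpolate' s v hvs v
  rw [← hX, coeff_X, if_neg (by omega)] at key
  exact key.symm


theorem bott_vanishing_grassmannian_lines (n : ℕ) (hn : 2 ≤ n) (h : Fin (n + 1) → ℂ)
    (hdist : Function.Injective h) :
    ∑ i : Fin (n + 1), ∑ j : Fin (n + 1),
      (if i < j then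
        1 / ∏ m ∈ Finset.univ \ {i, j}, ((h i - h m) * (h j - h m))
      else 0) = 0 := by
  classical
  set Q : Fin (n + 1) → ℂ := fun i => (∏ m ∈ univ.erase i, (h i - h m))⁻¹ with hQ
  set G : Fin (n + 1) → Fin (n + 1) → ℂ :=
    fun i j => (h i - h j) * (h j - h i) * Q i * Q j with hG
  -- term identity
  have hterm : ∀ i j : Fin (n + 1), i ≠ j →
      (1 : ℂ) / ∏ m ∈ univ \ {i, j}, ((h i - h m) * (h j - h m)) = G i j := by
    intro i j hij
    have hD1 : (univ \ {i, j} : Finset (Fin (n + 1))) = (univ.erase i).erase j := by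
      ext m; simp [and_comm]
    have hD2 : (univ \ {i, j} : Finset (Fin (n + 1))) = (univ.erase j).erase i := by
      ext m; simp [and_comm, or_comm]
    have hji : j ∈ univ.erase i := mem_erase.mpr ⟨hij.symm, mem_univ _⟩
    have hij' : i ∈ univ.erase j := mem_erase.mpr ⟨hij, mem_univ _⟩
    have hPi : ∏ m ∈ univ.erase i, (h i - h m)
        = (h i - h j) * ∏ m ∈ univ \ {i, j}, (h i - h m) := by
      rw [hD1]; exact (mul_prod_erase (univ.erase i) (fun m => h i - h m) hji).symm
    have hPj : ∏ m ∈ univ.erase j, (h j - h m)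
        = (h j - h i) * ∏ m ∈ univ \ {i, j}, (h j - h m) := by
      rw [hD2]; exact (mul_prod_erase (univ.erase j) (fun m => h j - h m) hij').symm
    have hne : ∀ a b : Fin (n + 1), a ≠ b → h a - h b ≠ 0 := fun a b hab =>
      sub_ne_zero_of_ne (fun e => hab (hdist e))
    have hA : (∏ m ∈ univ \ ({i, j} : Finset (Fin (n+1))), (h i - h m)) ≠ 0 := by
      refine prod_ne_zero_iff.mpr fun m hm => hne i m ?_
      simp only [mem_sdiff, mem_insert, mem_singleton] at hm
      exact fun e => hm.2 (Or.inl e.symm)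
    have hBne : (∏ m ∈ univ \ ({i, j} : Finset (Fin (n+1))), (h j - h m)) ≠ 0 := by
      refine prod_ne_zero_iff.mpr fun m hm => hne j m ?_
      simp only [mem_sdiff, mem_insert, mem_singleton] at hm
      exact fun e => hm.2 (Or.inr e.symm)
    rw [hG]
    simp only [hQ]
    rw [hPi, hPj, one_div, prod_mul_distrib, mul_inv, mul_inv, mul_inv]
    field_simp [hne i j hij, hne j i hij.symm]
  -- rewrite the sum using G
  have hstep1 : ∑ i : Fin (n + 1), ∑ j : Fin (n + 1),
      (if i < j then
        1 / ∏ m ∈ Finset.univ \ {i, j}, ((h i - h m) * (h j - h m))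
      else 0) = ∑ i : Fin (n + 1), ∑ j : Fin (n + 1), (if i < j then G i j else 0) := by
    refine sum_congr rfl fun i _ => sum_congr rfl fun j _ => ?_
    by_cases hij : i < j
    · rw [if_pos hij, if_pos hij, hterm i j hij.ne]
    · rw [if_neg hij, if_neg hij]
  rw [hstep1]
  -- Lagrange vanishing sums
  have hvs : Set.InjOn h (univ : Finset (Fin (n + 1))) := hdist.injOn
  have hW : ∀ i, nodalWeight univ h i = Q i := by
    intro i
    rw [nodalWeight_eq_eval_nodal_erase_inv, eval_nodal, hQ]
  have hcard : (univ : Finset (Fin (n + 1))).card = n + 1 := by simp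
  have hCsum : ∑ i : Fin (n + 1), Q i = 0 := by
    have := sum_nodalWeight_zero univ h hvs (by omega)
    simpa [hW] using this
  have hBsum : ∑ i : Fin (n + 1), h i * Q i = 0 := by
    have := sum_node_mul_nodalWeight_zero univ h hvs (by omega)
    simpa [hW] using this
  -- full double sum of G vanishes
  have htot : ∑ i : Fin (n + 1), ∑ j : Fin (n + 1), G i j = 0 := by
    have inner : ∀ i : Fin (n + 1), ∑ j : Fin (n + 1), G i j
        = (-(h i ^ 2 * Q i)) * (∑ j : Fin (n+1), Q j)
          + (2 * h i * Q i) * (∑ j : Fin (n+1), h j * Q j)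
          - Q i * (∑ j : Fin (n+1), h j ^ 2 * Q j) := by
      intro i
      rw [mul_sum, mul_sum, mul_sum, ← sum_add_distrib, ← sum_sub_distrib]
      refine sum_congr rfl fun j _ => ?_
      simp only [hG]
      ring
    calc ∑ i : Fin (n + 1), ∑ j : Fin (n + 1), G i j
        = ∑ i : Fin (n + 1), (-(Q i * (∑ j : Fin (n+1), h j ^ 2 * Q j))) := by
          refine sum_congr rfl fun i _ => ?_
          rw [inner i, hCsum, hBsum]
          ring
      _ = -((∑ i : Fin (n+1), Q i) * (∑ j : Fin (n+1), h j ^ 2 * Q j)) := by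
          simp only [← neg_mul]
          rw [← sum_mul, sum_neg_distrib, neg_mul]
      _ = 0 := by rw [hCsum]; ring
  -- symmetrization
  have hsym : ∀ i j, G j i = G i j := by intro i j; simp only [hG]; ring
  have hdiag : ∀ i, G i i = 0 := by intro i; simp [hG]
  have h2 : (2 : ℂ) * (∑ i : Fin (n + 1), ∑ j : Fin (n + 1), (if i < j then G i j else 0))
      = ∑ i : Fin (n + 1), ∑ j : Fin (n + 1), G i j := by
    rw [two_mul]
    nth_rewrite 2 [sum_comm]
    rw [← sum_add_distrib]
    refine sum_congr rfl fun i _ => ?_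
    rw [← sum_add_distrib]
    refine sum_congr rfl fun j _ => ?_
    rcases lt_trichotomy i j with hij | rfl | hij
    · rw [if_pos hij, if_neg (not_lt_of_gt hij), add_zero]
    · simp [hdiag]
    · rw [if_neg (not_lt_of_gt hij), if_pos hij, zero_add, hsym]
  have := h2.trans htot
  have h20 : (2 : ℂ) ≠ 0 := two_ne_zero
  exact (mul_eq_zero.mp this).resolve_left h20
end
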